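/- arXiv:1012.3149 — 3 statements merged into one kernel-verified Lean document; each statement's English description precedes it below -/
import Mathlib

section
/- Let k be a field, N a positive integer, and R = k[[x_1,…,x_N]] the ring of formal power series in N variables over k. Let G be a finite group acting on R by local k-algebra automorphisms (k-algebra automorphisms mapping the maximal ideal m = (x_1,…,x_N) into itself), and assume the characteristic of k does not divide the order of G. Then there exist elements y_1,…,y_N ∈ m such that the k-algebra endomorphism of R determined by x_i ↦ y_i is an automorphism of R, and for every g ∈ G and every i the element g · y_i is a k-linear combination of y_1,…,y_N (i.e., G acts by linear substitutions in the new parameters y_1,…,y_N). -/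
/-!
Since `|G|` is invertible in `k`, averaging over `G` the section `v ↦ ∑ vᵢ Xᵢ` of the projection
`m → m/m² ≅ kᴺ` yields a `G`-equivariant section `s`. The series `yᵢ = s(eᵢ)` are then transformed
linearly by `G`, and `yᵢ ≡ Xᵢ mod m²`. Such a family is the image of the `Xᵢ` under an automorphism:
the substitution `φ : Xᵢ ↦ yᵢ` satisfies `φ f - f ∈ m^(n+1)` for `f ∈ mⁿ`, so `φ` is injective
because `⋂ mⁿ = 0`, and surjective, a preimage of `t` being the Neumann series `∑ (id - φ)ⁿ t`.
-/

open MvPowerSeries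

namespace RingHom

variable {A : Type*} [CommRing A] (φ : A →+* A)

theorem apply_sub_self_mem_span_sq {s : Set A} (h₀ : ∀ a, φ a - a ∈ Ideal.span s)
    (hs : ∀ x ∈ s, φ x - x ∈ Ideal.span s ^ 2) {a : A} (ha : a ∈ Ideal.span s) :
    φ a - a ∈ Ideal.span s ^ 2 := by
  induction ha using Submodule.span_induction with
  | mem x hx => exact hs x hx
  | zero => simp
  | add x y _ _ hx hy => simpa [add_sub_add_comm] using Ideal.add_mem _ hx hy
  | smul r x hx hrx =>
    have : φ (r * x) - r * x = φ r * (φ x - x) + (φ r - r) * x := by rw [map_mul]; ring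
    rw [smul_eq_mul, this, sq]
    exact Ideal.add_mem _ (Ideal.mul_mem_left _ _ (sq (Ideal.span s) ▸ hrx))
      (Ideal.mul_mem_mul (h₀ r) hx)

theorem apply_sub_self_mem_pow_succ {I : Ideal A} (h₀ : ∀ a, φ a - a ∈ I)
    (h₁ : ∀ a ∈ I, φ a - a ∈ I ^ 2) {n : ℕ} {a : A} (ha : a ∈ I ^ n) :
    φ a - a ∈ I ^ (n + 1) := by
  induction n generalizing a with
  | zero => simpa using h₀ a
  | succ n ih =>
    rw [pow_succ] at ha
    induction ha using Submodule.mul_induction_on' with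
    | mem_mul_mem a ha b hb =>
      have hφb : φ b ∈ I := by
        simpa using I.add_mem (Ideal.pow_le_self two_ne_zero (h₁ b hb)) hb
      have : φ (a * b) - a * b = (φ a - a) * φ b + a * (φ b - b) := by rw [map_mul]; ring
      rw [this]
      refine Ideal.add_mem _ ?_ ?_
      · simpa [← pow_succ] using Ideal.mul_mem_mul (ih ha) hφb
      · simpa [← pow_add] using Ideal.mul_mem_mul ha (h₁ b hb)
    | add x _ y _ hx hy => simpa [add_sub_add_comm] using Ideal.add_mem _ hx hy

end RingHom

namespace MvPowerSeries

open Finsupp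

variable {σ R : Type*} [CommRing R]

local notation "𝔪" => Ideal.span (Set.range X)

theorem span_range_X_le_ker_constantCoeff :
    𝔪 ≤ RingHom.ker (constantCoeff (σ := σ) (R := R)) :=
  Ideal.span_le.mpr <| by rintro _ ⟨i, rfl⟩; simp

theorem le_order_of_mem_span_range_X_pow {f : MvPowerSeries σ R} {n : ℕ}
    (hf : f ∈ 𝔪 ^ n) : (n : ℕ∞) ≤ f.order := by
  induction n generalizing f with
  | zero => simp
  | succ n ih =>
    rw [pow_succ] at hf
    induction hf using Submodule.mul_induction_on' with
    | mem_mul_mem a ha b hb =>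
      have hb : 1 ≤ b.order :=
        one_le_order_iff_constCoeff_eq_zero.mpr (span_range_X_le_ker_constantCoeff hb)
      push_cast
      exact (add_le_add (ih ha) hb).trans le_order_mul
    | add a _ b _ ha hb => exact (le_min ha hb).trans min_order_le_add

theorem exists_eq_sum_X_mul_of_le_order [Fintype σ] [LinearOrder σ] {f : MvPowerSeries σ R}
    {n : ℕ} (hf : (n + 1 : ℕ∞) ≤ f.order) :
    ∃ h : σ → MvPowerSeries σ R, f = ∑ i, X i * h i ∧ ∀ i, (n : ℕ∞) ≤ (h i).order := by
  classical
  -- `h i` collects the monomials whose least variable is `i`, divided by `X i`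
  let h : σ → MvPowerSeries σ R := fun i e =>
    if ∀ j < i, e j = 0 then coeff (e + single i 1) f else 0
  have coeff_h (i : σ) (e : σ →₀ ℕ) :
      coeff e (h i) = if ∀ j < i, e j = 0 then coeff (e + single i 1) f else 0 := rfl
  refine ⟨h, ?_, fun i => le_order fun e he => ?_⟩
  · ext d
    simp_rw [map_sum, X_def, coeff_monomial_mul, one_mul, coeff_h, single_le_iff,
      Nat.one_le_iff_ne_zero]
    obtain rfl | hd := eq_or_ne d 0
    · simp [coeff_of_lt_order (lt_of_lt_of_le (by simp) hf : ((0 : σ →₀ ℕ).degree : ℕ∞) < _)]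
    have hsupp := support_nonempty_iff.mpr hd
    set m := d.support.min' hsupp
    have hm : d m ≠ 0 := mem_support_iff.mp (d.support.min'_mem hsupp)
    have below_m (j : σ) (hj : j < m) : d j = 0 :=
      notMem_support_iff.mp fun hj' => (d.support.min'_le j hj').not_gt hj
    rw [Finset.sum_eq_single m _ (by simp), if_pos hm, if_pos, tsub_add_cancel_of_le
      (single_le_iff.mpr (Nat.one_le_iff_ne_zero.mpr hm))]
    · intro j hj
      simp [below_m j hj]
    · intro i _ him
      split_ifs with hi hbelow
      · have hmi : m < i := lt_of_le_of_ne (d.support.min'_le i (mem_support_iff.mpr hi))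
          (Ne.symm him)
        have := hbelow m hmi
        rw [tsub_apply, single_eq_of_ne hmi.ne, Nat.sub_zero] at this
        exact absurd this hm
      all_goals rfl
  · rw [coeff_h]
    split_ifs
    · refine coeff_of_lt_order (lt_of_lt_of_le ?_ hf)
      have : e.degree < n := by exact_mod_cast he
      simp only [map_add, degree_single]
      exact_mod_cast Nat.succ_lt_succ this
    · rfl

theorem mem_span_range_X_pow_iff [Finite σ] {f : MvPowerSeries σ R} {n : ℕ} :
    f ∈ 𝔪 ^ n ↔ (n : ℕ∞) ≤ f.order := by
  refine ⟨le_order_of_mem_span_range_X_pow, fun hf => ?_⟩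
  have := Fintype.ofFinite σ
  let := LinearOrder.lift' _ (Fintype.equivFin σ).injective
  induction n generalizing f with
  | zero => simp
  | succ n ih =>
    obtain ⟨h, rfl, hh⟩ := exists_eq_sum_X_mul_of_le_order (by exact_mod_cast hf)
    rw [pow_succ']
    exact Ideal.sum_mem _ fun i _ =>
      Ideal.mul_mem_mul (Ideal.subset_span ⟨i, rfl⟩) (ih (hh i))

theorem mem_span_range_X_iff [Finite σ] {f : MvPowerSeries σ R} :
    f ∈ 𝔪 ↔ constantCoeff f = 0 := by
  simpa [one_le_order_iff_constCoeff_eq_zero] using mem_span_range_X_pow_iff (f := f) (n := 1)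

theorem constantCoeff_algHom_apply (φ : MvPowerSeries σ R →ₐ[R] MvPowerSeries σ R)
    (hφ : ∀ f, constantCoeff f = 0 → constantCoeff (φ f) = 0) (f : MvPowerSeries σ R) :
    constantCoeff (φ f) = constantCoeff f := by
  have := hφ (f - C (constantCoeff f)) (by simp)
  rwa [map_sub, c_eq_algebraMap, φ.commutes, map_sub, ← c_eq_algebraMap, constantCoeff_C,
    sub_eq_zero] at this

theorem injective_of_apply_sub_self_mem_pow_succ
    (φ : MvPowerSeries σ R →+ MvPowerSeries σ R)
    (hφ : ∀ n, ∀ f ∈ 𝔪 ^ n, φ f - f ∈ 𝔪 ^ (n + 1)) :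
    Function.Injective φ := by
  refine (injective_iff_map_eq_zero φ).mpr fun f hf => ?_
  have hmem (n : ℕ) : f ∈ 𝔪 ^ n := by
    induction n with
    | zero => simp
    | succ n ih => simpa [hf] using hφ n f ih
  exact order_eq_top_iff.mp <| ENat.eq_top_iff_forall_ge.mpr fun n =>
    le_order_of_mem_span_range_X_pow (hmem n)

open WithPiTopology in
theorem surjective_of_apply_sub_self_mem_pow_succ [TopologicalSpace R] [DiscreteTopology R]
    (φ : MvPowerSeries σ R →+ MvPowerSeries σ R) (hφc : Continuous φ)
    (hφ : ∀ n, ∀ f ∈ 𝔪 ^ n, φ f - f ∈ 𝔪 ^ (n + 1)) :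
    Function.Surjective φ := by
  intro t
  -- the Neumann series `∑ (id - φ)ⁿ t`
  let a (n : ℕ) := (fun f => f - φ f)^[n] t
  have ha_succ (n : ℕ) : a (n + 1) = a n - φ (a n) := Function.iterate_succ_apply' ..
  have ha_mem (n : ℕ) : a n ∈ 𝔪 ^ n := by
    induction n with
    | zero => simp
    | succ n ih => simpa [ha_succ] using (Submodule.neg_mem_iff _).mpr (hφ n _ ih)
  have ha : Summable a := by
    refine summable_of_tendsto_order_atTop_nhds_top <| ENat.tendsto_nhds_top_iff_natCast_lt.mpr
      fun n => Filter.eventually_atTop.mpr ⟨n + 1, fun m hm => ?_⟩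
    exact lt_of_lt_of_le (by exact_mod_cast hm) (le_order_of_mem_span_range_X_pow (ha_mem m))
  refine ⟨∑' n, a n, ?_⟩
  have hφa (n : ℕ) : φ (a n) = a n - a (n + 1) := by rw [ha_succ, sub_sub_cancel]
  rw [ha.map_tsum φ hφc, tsum_congr hφa, ha.tsum_sub ((summable_nat_add_iff 1).mpr ha),
    ha.tsum_eq_zero_add, add_sub_cancel_right]
  rfl

open WithPiTopology in
theorem exists_algEquiv_X_eq_of_sub_X_mem_sq [Finite σ] {y : σ → MvPowerSeries σ R}
    (hy : ∀ i, y i - X i ∈ 𝔪 ^ 2) :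
    ∃ φ : MvPowerSeries σ R ≃ₐ[R] MvPowerSeries σ R, ∀ i, φ (X i) = y i := by
  have hy₀ (i : σ) : constantCoeff (y i) = 0 := by
    have := Ideal.add_mem _ (Ideal.pow_le_self two_ne_zero (hy i)) (Ideal.subset_span ⟨i, rfl⟩)
    rwa [sub_add_cancel, mem_span_range_X_iff] at this
  have hsubst := hasSubst_of_constantCoeff_zero hy₀
  let φ := substAlgHom (R := R) hsubst
  have hφ₀ (f : MvPowerSeries σ R) : φ f - f ∈ 𝔪 := by
    rw [mem_span_range_X_iff, map_sub, sub_eq_zero]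
    refine constantCoeff_algHom_apply φ (fun g hg => ?_) f
    simpa [φ] using constantCoeff_subst_eq_zero hsubst hy₀ hg
  have hφ (n : ℕ) (f) (hf : f ∈ 𝔪 ^ n) :
      φ f - f ∈ 𝔪 ^ (n + 1) :=
    RingHom.apply_sub_self_mem_pow_succ φ.toRingHom hφ₀
      (fun _ => RingHom.apply_sub_self_mem_span_sq φ.toRingHom hφ₀
        (by rintro _ ⟨i, rfl⟩; simpa [φ, subst_X hsubst] using hy i)) hf
  let : UniformSpace R := ⊥
  have : DiscreteUniformity R := ⟨rfl⟩
  have hφc : Continuous φ := by simpa [φ] using continuous_subst (R := R) hsubst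
  exact ⟨AlgEquiv.ofBijective φ
    ⟨injective_of_apply_sub_self_mem_pow_succ φ.toAddMonoidHom hφ,
      surjective_of_apply_sub_self_mem_pow_succ φ.toAddMonoidHom hφc hφ⟩,
    substAlgHom_X hsubst⟩

noncomputable def linearCoeff : MvPowerSeries σ R →ₗ[R] σ → R :=
  LinearMap.pi fun i => coeff (single i 1)

theorem linearCoeff_apply (f : MvPowerSeries σ R) (i : σ) :
    linearCoeff f i = coeff (single i 1) f := rfl

theorem linearCoeff_eq_zero_of_mem_sq {f : MvPowerSeries σ R}
    (hf : f ∈ 𝔪 ^ 2) : linearCoeff f = 0 :=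
  funext fun i => coeff_of_lt_order <|
    lt_of_lt_of_le (by simp) (le_order_of_mem_span_range_X_pow hf)

theorem mem_sq_of_linearCoeff_eq_zero [Finite σ] {f : MvPowerSeries σ R}
    (hf : f ∈ 𝔪) (h : linearCoeff f = 0) :
    f ∈ 𝔪 ^ 2 := by
  refine mem_span_range_X_pow_iff.mpr (le_order fun d hd => ?_)
  obtain hd | hd : d.degree = 0 ∨ d.degree = 1 := by
    have : d.degree < 2 := by exact_mod_cast hd
    omega
  · rw [(degree_eq_zero_iff d).mp hd, coeff_zero_eq_constantCoeff_apply]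
    exact mem_span_range_X_iff.mp hf
  · obtain ⟨i, rfl⟩ : d ∈ Set.range (single · 1) := range_single_one ▸ hd
    exact congr_fun h i

variable [Fintype σ]

noncomputable def linearForm : (σ → R) →ₗ[R] MvPowerSeries σ R :=
  Fintype.linearCombination R X

theorem linearForm_mem_span (v : σ → R) : linearForm v ∈ 𝔪 := by
  simp [mem_span_range_X_iff, linearForm, Fintype.linearCombination_apply]

theorem linearCoeff_linearForm (v : σ → R) : linearCoeff (linearForm v) = v := by
  classical
  ext i
  simp [linearCoeff_apply, linearForm, Fintype.linearCombination_apply, coeff_X,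
    single_left_inj one_ne_zero]

theorem linearForm_single [DecidableEq σ] (i : σ) : linearForm (Pi.single i (1 : R)) = X i := by
  simp [linearForm, Fintype.linearCombination_apply, Pi.single_apply]

theorem linearCoeff_map_of_mem {F : Type*} [FunLike F (MvPowerSeries σ R) (MvPowerSeries σ R)]
    [RingHomClass F (MvPowerSeries σ R) (MvPowerSeries σ R)] (ψ : F)
    (hψ : ∀ f ∈ 𝔪, ψ f ∈ 𝔪)
    {f : MvPowerSeries σ R} (hf : f ∈ 𝔪) :
    linearCoeff (ψ f) = linearCoeff (ψ (linearForm (linearCoeff f))) := by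
  have hsq : f - linearForm (linearCoeff f) ∈ 𝔪 ^ 2 :=
    mem_sq_of_linearCoeff_eq_zero (Ideal.sub_mem _ hf (linearForm_mem_span _))
      (by rw [map_sub, linearCoeff_linearForm, sub_self])
  have hψsq : Ideal.map ψ (𝔪 ^ 2) ≤ 𝔪 ^ 2 := by
    rw [Ideal.map_pow]
    exact Ideal.pow_right_mono (Ideal.map_le_iff_le_comap.mpr hψ) 2
  rw [← sub_eq_zero, ← map_sub, ← map_sub]
  exact linearCoeff_eq_zero_of_mem_sq (hψsq (Ideal.mem_map_of_mem ψ hsq))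

section Linearization

open Representation

variable {G : Type*} [Group G] (ρ : G →* (MvPowerSeries σ R ≃ₐ[R] MvPowerSeries σ R))
  (hρ : ∀ g, ∀ f ∈ 𝔪, ρ g f ∈ 𝔪)

/-- The action of `G` on `m/m²`, in the basis given by the classes of the `X i`. -/
noncomputable def cotangentRep : Representation R G (σ → R) where
  toFun g := linearCoeff ∘ₗ (ρ g).toLinearMap ∘ₗ linearForm
  map_one' := LinearMap.ext fun v => by simp [linearCoeff_linearForm]
  map_mul' g h := LinearMap.ext fun v => by
    simpa using linearCoeff_map_of_mem (ρ g) (hρ g) (hρ h _ (linearForm_mem_span v))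

theorem cotangentRep_apply (g : G) (v : σ → R) :
    cotangentRep ρ hρ g v = linearCoeff (ρ g (linearForm v)) := rfl

variable [Fintype G] [Invertible (Fintype.card G : R)]

noncomputable def cotangentSection : (σ → R) →ₗ[R] MvPowerSeries σ R :=
  averageMap (linHom (cotangentRep ρ hρ) ((AlgEquiv.toLinearMapHom R _).comp ρ)) linearForm

theorem cotangentSection_apply (v : σ → R) :
    cotangentSection ρ hρ v =
      ⅟(Fintype.card G : R) • ∑ g, ρ g (linearForm (cotangentRep ρ hρ g⁻¹ v)) := by
  simp [cotangentSection, GroupAlgebra.average]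

theorem cotangentSection_cotangentRep (g : G) (v : σ → R) :
    cotangentSection ρ hρ (cotangentRep ρ hρ g v) = ρ g (cotangentSection ρ hρ v) :=
  ((mem_linHom_invariants_iff_isIntertwining _).mp
    (averageMap_invariant (linHom (cotangentRep ρ hρ) ((AlgEquiv.toLinearMapHom R _).comp ρ))
      linearForm)).isIntertwining g v

theorem linearCoeff_cotangentSection (v : σ → R) :
    linearCoeff (cotangentSection ρ hρ v) = v := by
  have hterm (g : G) : linearCoeff (ρ g (linearForm (cotangentRep ρ hρ g⁻¹ v))) = v := by
    rw [← cotangentRep_apply ρ hρ, ← Module.End.mul_apply, ← map_mul, mul_inv_cancel, map_one,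
      Module.End.one_apply]
  rw [cotangentSection_apply, map_smul, map_sum, Finset.sum_congr rfl fun g _ => hterm g,
    Finset.sum_const, Finset.card_univ, ← Nat.cast_smul_eq_nsmul R, smul_smul, invOf_mul_self,
    one_smul]

theorem cotangentSection_mem_span (v : σ → R) :
    cotangentSection ρ hρ v ∈ 𝔪 := by
  rw [cotangentSection_apply]
  exact Submodule.smul_of_tower_mem _ _ <|
    Ideal.sum_mem _ fun g _ => hρ g _ (linearForm_mem_span _)

end Linearization

end MvPowerSeries

theorem finite_group_action_on_power_series_linearizable_general
    (k : Type*) [Field k] (N : ℕ)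
    (G : Type*) [Group G] [Finite G]
    (ρ : G →* (MvPowerSeries (Fin N) k ≃ₐ[k] MvPowerSeries (Fin N) k))
    (hchar : ¬ ringChar k ∣ Nat.card G)
    (hloc : ∀ g : G, ∀ f ∈ Ideal.span
        (Set.range (MvPowerSeries.X : Fin N → MvPowerSeries (Fin N) k)),
      ρ g f ∈ Ideal.span
        (Set.range (MvPowerSeries.X : Fin N → MvPowerSeries (Fin N) k))) :
    ∃ y : Fin N → MvPowerSeries (Fin N) k,
      (∀ i, y i ∈ Ideal.span
        (Set.range (MvPowerSeries.X : Fin N → MvPowerSeries (Fin N) k))) ∧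
      (∃ φ : MvPowerSeries (Fin N) k ≃ₐ[k] MvPowerSeries (Fin N) k,
        ∀ i, φ (MvPowerSeries.X i) = y i) ∧
      ∀ (g : G) (i : Fin N), ∃ c : Fin N → k,
        ρ g (y i) = ∑ j : Fin N, c j • y j := by
  let := Fintype.ofFinite G
  have : Invertible (Fintype.card G : k) := invertibleOfNonzero <| by
    rwa [← Nat.card_eq_fintype_card, Ne, CharP.cast_eq_zero_iff k (ringChar k)]
  let y (i : Fin N) := cotangentSection ρ hloc (Pi.single i 1)
  have hy (i : Fin N) : y i ∈ Ideal.span (Set.range X) := cotangentSection_mem_span ρ hloc _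
  refine ⟨y, hy, exists_algEquiv_X_eq_of_sub_X_mem_sq fun i => ?_,
    fun g i => ⟨cotangentRep ρ hloc g (Pi.single i 1), ?_⟩⟩
  · refine mem_sq_of_linearCoeff_eq_zero (Ideal.sub_mem _ (hy i) (Ideal.subset_span ⟨i, rfl⟩)) ?_
    rw [map_sub, linearCoeff_cotangentSection, ← linearForm_single, linearCoeff_linearForm,
      sub_self]
  · rw [← cotangentSection_cotangentRep]
    conv_lhs => rw [← (Pi.basisFun k (Fin N)).sum_repr (cotangentRep ρ hloc g (Pi.single i 1))]
    simp [map_sum, y]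

/-- **Formal linearization of finite group actions (Lemma on linearization).**
Let `R = k[[x₁,…,x_N]]` and let a finite group `G` act on `R` by `k`-algebra automorphisms
preserving the maximal ideal `m = (x₁,…,x_N)`, with `char k` not dividing `|G|`.  Then there
are new local parameters `y₁,…,y_N ∈ m` (i.e. elements of `m` such that the substitution
`xᵢ ↦ yᵢ` is realized by a `k`-algebra automorphism of `R`) in which `G` acts by linear
substitutions: every `g · yᵢ` is a `k`-linear combination of `y₁,…,y_N`. -/
theorem finite_group_action_on_power_series_linearizable
    (k : Type*) [Field k] (N : ℕ) (hN : 0 < N)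
    (G : Type*) [Group G] [Finite G]
    (ρ : G →* (MvPowerSeries (Fin N) k ≃ₐ[k] MvPowerSeries (Fin N) k))
    (hchar : ¬ ringChar k ∣ Nat.card G)
    (hloc : ∀ g : G, ∀ f ∈ Ideal.span
        (Set.range (MvPowerSeries.X : Fin N → MvPowerSeries (Fin N) k)),
      ρ g f ∈ Ideal.span
        (Set.range (MvPowerSeries.X : Fin N → MvPowerSeries (Fin N) k))) :
    ∃ y : Fin N → MvPowerSeries (Fin N) k,
      (∀ i, y i ∈ Ideal.span
        (Set.range (MvPowerSeries.X : Fin N → MvPowerSeries (Fin N) k))) ∧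
      (∃ φ : MvPowerSeries (Fin N) k ≃ₐ[k] MvPowerSeries (Fin N) k,
        ∀ i, φ (MvPowerSeries.X i) = y i) ∧
      ∀ (g : G) (i : Fin N), ∃ c : Fin N → k,
        ρ g (y i) = ∑ j : Fin N, c j • y j :=
  finite_group_action_on_power_series_linearizable_general k N G ρ hchar hloc
end

section
/- Let m, n, r be positive integers with r^n ≡ 1 (mod m) and gcd(n(r−1), m) = 1, let d be the multiplicative order of r modulo m, assume d divides n, set n' = n/d, and assume every prime divisor of d divides n'. Let k, l be integers with gcd(k, m) = 1 and gcd(l, n) = 1. Define matrices A₀, B₀ of size d×d over ℂ by A₀ = diag(e^{2πik/m}, e^{2πikr/m}, …, e^{2πikr^{d−1}/m}) and B₀ having (j, j+1)-entry equal to 1 for 1 ≤ j ≤ d−1, (d, 1)-entry equal to e^{2πil/n'}, and all other entries 0. Then det A₀ = 1 and det B₀ = (−1)^{d−1}·e^{2πil/n'}; consequently, the subgroup of GL(d, ℂ) generated by A₀ and B₀ is contained in SL(d, ℂ) if and only if either m = n = d = 1, or d = 2^s and n = 2^{s+1} for some s ≥ 1. -/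
/-!
`det A₀ = exp (2πik (1 + r + ⋯ + r^(d-1)) / m) = 1`: since `r - 1` is a unit mod `m` and
`(r - 1)(1 + r + ⋯ + r^(d-1)) = r^d - 1 ≡ 0`, the geometric sum is divisible by `m`.
`B₀` is `diag(1, …, 1, ζ)` times the permutation matrix of a `d`-cycle, so
`det B₀ = (-1)^(d-1) ζ`, where `ζ = e^(2πil/n')` is a primitive `n'`-th root of unity.
As `det` is a homomorphism, the generated group lies in `SL(d, ℂ)` iff `det B₀ = 1`, i.e.
`ζ = (-1)^(d-1)`. This happens iff `n' = 1` and `d` is odd, or `n' = 2` and `d` is even; since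
the primes dividing `d` divide `n'`, the first case means `d = 1` (so `r ≡ 1` and `m = 1`),
the second `d = 2^s`.
-/

open Matrix Complex

/-- The matrix `π_{k,l}(A) = diag(e^{2πik/m}, e^{2πikr/m}, …, e^{2πikr^{d−1}/m})` of the
generator `A` in the irreducible representation `π_{k,l}` of a group of Wolf's type I. -/
noncomputable def typeIMatA (m d r : ℕ) (k : ℤ) : Matrix (Fin d) (Fin d) ℂ :=
  Matrix.diagonal fun j =>
    Complex.exp (2 * Real.pi * Complex.I * (k : ℂ) * (r : ℂ) ^ (j : ℕ) / (m : ℂ))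

/-- The matrix `π_{k,l}(B)` of the generator `B`: `(j, j+1)`-entries equal to `1` for
`1 ≤ j ≤ d−1`, `(d,1)`-entry equal to `e^{2πil/n'}` (with `n' = n/d`), all other entries `0`. -/
noncomputable def typeIMatB (n d : ℕ) (l : ℤ) : Matrix (Fin d) (Fin d) ℂ :=
  Matrix.of fun i j =>
    if (j : ℕ) = (i : ℕ) + 1 then 1
    else if (i : ℕ) = d - 1 ∧ (j : ℕ) = 0 then
      Complex.exp (2 * Real.pi * Complex.I * (l : ℂ) / ((n / d : ℕ) : ℂ))
    else 0

theorem geom_sum_eq_zero_of_pow_eq_one {R : Type*} [CommRing R] {x : R} {d : ℕ}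
    (hx : x ^ d = 1) (hx1 : IsUnit (x - 1)) : ∑ i ∈ Finset.range d, x ^ i = 0 :=
  hx1.mul_left_eq_zero.mp (by rw [geom_sum_mul, hx, sub_self])

theorem ZMod.isUnit_natCast_sub_one {r m : ℕ} (h : (r - 1).Coprime m) :
    IsUnit ((r : ZMod m) - 1) := by
  rcases r with _ | r
  · -- `0 - 1` truncates to `0` in `ℕ`, so `m = 1`
    have : Subsingleton (ZMod m) := ZMod.subsingleton_iff.mpr (Nat.coprime_zero_left m |>.mp h)
    exact isUnit_of_subsingleton _
  · simpa using (ZMod.isUnit_iff_coprime r m).mpr h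

theorem ZMod.eq_one_of_orderOf_natCast_eq_one {r m : ℕ} (h : (r - 1).Coprime m)
    (hr : orderOf (r : ZMod m) = 1) : m = 1 := by
  have hunit := ZMod.isUnit_natCast_sub_one h
  rw [orderOf_eq_one_iff.mp hr, sub_self, isUnit_zero_iff] at hunit
  exact ZMod.subsingleton_iff.mp (subsingleton_of_zero_eq_one hunit)

theorem dvd_geom_sum_orderOf {r m : ℕ} (h : (r - 1).Coprime m) :
    m ∣ ∑ j ∈ Finset.range (orderOf (r : ZMod m)), r ^ j := by
  rw [← ZMod.natCast_eq_zero_iff]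
  push_cast
  exact geom_sum_eq_zero_of_pow_eq_one (pow_orderOf_eq_one _) (ZMod.isUnit_natCast_sub_one h)

theorem exp_two_pi_I_mul_div_eq_one_of_dvd {m S : ℕ} (h : m ∣ S) (k : ℤ) :
    exp (2 * Real.pi * I * k * S / m) = 1 := by
  obtain ⟨t, rfl⟩ := h
  rcases eq_or_ne m 0 with rfl | hm
  · simp
  · rw [← exp_int_mul_two_pi_mul_I (k * t)]
    push_cast
    field_simp

theorem det_typeIMatA (m d r : ℕ) (k : ℤ) :
    (typeIMatA m d r k).det =
      exp (2 * Real.pi * I * k * ((∑ j ∈ Finset.range d, r ^ j : ℕ) : ℂ) / m) := by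
  rw [typeIMatA, det_diagonal, ← exp_sum, Fin.sum_univ_eq_sum_range
    (fun j => 2 * (Real.pi : ℂ) * I * k * (r : ℂ) ^ j / m), ← Finset.sum_div, ← Finset.mul_sum]
  push_cast
  rfl

theorem det_typeIMatA_eq_one {m r d : ℕ} (h : (r - 1).Coprime m)
    (hd : orderOf (r : ZMod m) = d) (k : ℤ) : (typeIMatA m d r k).det = 1 := by
  rw [det_typeIMatA]
  exact exp_two_pi_I_mul_div_eq_one_of_dvd (hd ▸ dvd_geom_sum_orderOf h) k

theorem typeIMatB_succ_eq_diagonal_mul_permMatrix (n e : ℕ) (l : ℤ) :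
    typeIMatB n (e + 1) l =
      diagonal (Function.update 1 (Fin.last e)
        (exp (2 * Real.pi * I * l / ((n / (e + 1) : ℕ) : ℂ)))) *
      (finRotate (e + 1)).permMatrix ℂ := by
  ext i j
  rw [diagonal_mul]
  simp only [typeIMatB, of_apply, Equiv.Perm.permMatrix, PEquiv.toMatrix_apply,
    Equiv.toPEquiv_apply, Option.mem_def, Option.some.injEq, Fin.ext_iff, coe_finRotate]
  by_cases hi : i = Fin.last e
  · subst hi
    simp only [Function.update_self, Fin.val_last, if_true, mul_ite, mul_one, mul_zero]
    split_ifs <;> first | rfl | omega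
  · rw [Function.update_of_ne hi, Pi.one_apply, one_mul]
    have hi' : (i : ℕ) < e := Fin.val_lt_last hi
    simp only [Fin.val_last, Nat.add_sub_cancel, hi'.ne, if_false, false_and]
    split_ifs <;> first | rfl | omega

theorem det_typeIMatB (n d : ℕ) (l : ℤ) :
    (typeIMatB n d l).det =
      (-1) ^ (d - 1) * exp (2 * Real.pi * I * l / ((n / d : ℕ) : ℂ)) := by
  rcases d with _ | e
  · simp
  · rw [typeIMatB_succ_eq_diagonal_mul_permMatrix, det_mul, det_diagonal, det_permutation,
      sign_finRotate, Finset.prod_update_of_mem (Finset.mem_univ _)]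
    simp [mul_comm]

theorem Matrix.GeneralLinearGroup.forall_mem_closure_det_eq_one_iff {ι R : Type*} [Fintype ι]
    [DecidableEq ι] [CommRing R] {A B : Matrix ι ι R} (hA : IsUnit A.det) (hB : IsUnit B.det) :
    (∀ M ∈ Subgroup.closure {g : GL ι R | (g : Matrix ι ι R) = A ∨ (g : Matrix ι ι R) = B},
        (M : Matrix ι ι R).det = 1) ↔ A.det = 1 ∧ B.det = 1 := by
  have key := Subgroup.closure_le (K := (GeneralLinearGroup.det : GL ι R →* Rˣ).ker)
    (k := {g : GL ι R | (g : Matrix ι ι R) = A ∨ (g : Matrix ι ι R) = B})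
  simp only [SetLike.le_def, Set.subset_def, MonoidHom.mem_ker, Units.ext_iff,
    GeneralLinearGroup.val_det_apply, Units.val_one, SetLike.mem_coe] at key
  rw [key]
  refine ⟨fun h => ⟨?_, ?_⟩, ?_⟩
  · exact h (nonsingInvUnit A hA) (Or.inl rfl)
  · exact h (nonsingInvUnit B hB) (Or.inr rfl)
  · rintro ⟨hA1, hB1⟩ g (rfl | rfl) <;> assumption

theorem isPrimitiveRoot_exp_two_pi_I_mul_div {N : ℕ} (hN : N ≠ 0) {l : ℤ} (hl : l.gcd N = 1) :
    IsPrimitiveRoot (exp (2 * Real.pi * I * l / N)) N := by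
  rw [mul_comm _ (l : ℂ), mul_div_assoc, exp_int_mul]
  exact (isPrimitiveRoot_exp N hN).zpow_of_gcd_eq_one l hl

theorem IsPrimitiveRoot.eq_neg_one_pow_iff {R : Type*} [CommRing R] [IsDomain R] [CharZero R]
    {ζ : R} {N : ℕ} (h : IsPrimitiveRoot ζ N) (e : ℕ) :
    ζ = (-1) ^ e ↔ N = 1 ∧ Even e ∨ N = 2 ∧ Odd e := by
  have h1 : ζ = 1 ↔ N = 1 := ⟨fun h' => h.unique (h' ▸ .one), fun hN => by simpa [hN] using h⟩
  have h2 : ζ = -1 ↔ N = 2 :=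
    ⟨fun h' => h.unique (h' ▸ .neg_one 0 (by norm_num)), fun hN => (hN ▸ h).eq_neg_one_of_two_right⟩
  rcases e.even_or_odd with he | he
  · simp [he.neg_one_pow, h1, he, Nat.not_odd_iff_even.mpr he]
  · simp [he.neg_one_pow, h2, he, Nat.not_even_iff_odd.mpr he]

theorem neg_one_pow_mul_eq_one_iff {R : Type*} [Ring R] (e : ℕ) (x : R) :
    (-1) ^ e * x = 1 ↔ x = (-1) ^ e := by
  rcases e.even_or_odd with he | he <;> simp [he.neg_one_pow, neg_eq_iff_eq_neg]

theorem eq_one_and_even_pred_iff {m n r d n' : ℕ} (hcop : (r - 1).Coprime m)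
    (hd : orderOf (r : ZMod m) = d) (hnd : n = d * n')
    (hpq : ∀ p : ℕ, p.Prime → p ∣ d → p ∣ n') :
    n' = 1 ∧ Even (d - 1) ↔ m = 1 ∧ n = 1 ∧ d = 1 := by
  constructor
  · rintro ⟨rfl, -⟩
    obtain rfl : d = 1 := Nat.eq_one_iff_not_exists_prime_dvd.mpr fun p hp hpd =>
      hp.not_dvd_one (hpq p hp hpd)
    exact ⟨ZMod.eq_one_of_orderOf_natCast_eq_one hcop hd, hnd, rfl⟩
  · rintro ⟨-, rfl, rfl⟩
    exact ⟨by simpa using hnd.symm, ⟨0, rfl⟩⟩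

theorem eq_two_and_odd_pred_iff {n d n' : ℕ} (hd : d ≠ 0) (hnd : n = d * n')
    (hpq : ∀ p : ℕ, p.Prime → p ∣ d → p ∣ n') :
    n' = 2 ∧ Odd (d - 1) ↔ ∃ s, 1 ≤ s ∧ d = 2 ^ s ∧ n = 2 ^ (s + 1) := by
  constructor
  · rintro ⟨rfl, hodd⟩
    obtain ⟨s, rfl⟩ : ∃ s, d = 2 ^ s := ⟨_, Nat.eq_prime_pow_of_unique_prime_dvd hd fun hp hpd =>
      (Nat.prime_dvd_prime_iff_eq hp Nat.prime_two).mp (hpq _ hp hpd)⟩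
    refine ⟨s, Nat.one_le_iff_ne_zero.mpr ?_, rfl, by rw [hnd, pow_succ]⟩
    rintro rfl
    simp at hodd
  · rintro ⟨s, hs, rfl, rfl⟩
    refine ⟨(Nat.eq_of_mul_eq_mul_left (by positivity) (pow_succ 2 s ▸ hnd)).symm, ?_⟩
    exact Nat.Even.sub_odd Nat.one_le_two_pow ((Nat.even_pow' (by omega)).mpr even_two) odd_one

theorem typeI_representation_determinants_general
    (m n r d : ℕ) (hn : 0 < n)
    (hcop : Nat.gcd (n * (r - 1)) m = 1)
    (hd : orderOf (r : ZMod m) = d) (hdn : d ∣ n)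
    (hpq : ∀ p : ℕ, p.Prime → p ∣ d → p ∣ n / d)
    (k l : ℤ) (hl : Int.gcd l (n : ℤ) = 1) :
    (typeIMatA m d r k).det = 1 ∧
    (typeIMatB n d l).det =
      (-1 : ℂ) ^ (d - 1) * Complex.exp (2 * Real.pi * Complex.I * (l : ℂ) / ((n / d : ℕ) : ℂ)) ∧
    ((∀ M : Matrix.GeneralLinearGroup (Fin d) ℂ,
        M ∈ Subgroup.closure {g : Matrix.GeneralLinearGroup (Fin d) ℂ |
          (g : Matrix (Fin d) (Fin d) ℂ) = typeIMatA m d r k ∨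
          (g : Matrix (Fin d) (Fin d) ℂ) = typeIMatB n d l} →
        (M : Matrix (Fin d) (Fin d) ℂ).det = 1) ↔
      (m = 1 ∧ n = 1 ∧ d = 1) ∨ ∃ s : ℕ, 1 ≤ s ∧ d = 2 ^ s ∧ n = 2 ^ (s + 1)) := by
  have hcop' : (r - 1).Coprime m := Nat.Coprime.coprime_dvd_left (dvd_mul_left _ _) hcop
  have hnd : n = d * (n / d) := (Nat.mul_div_cancel' hdn).symm
  have hd0 : d ≠ 0 := left_ne_zero_of_mul (hnd ▸ hn.ne')
  have hζ : IsPrimitiveRoot (exp (2 * Real.pi * I * l / ((n / d : ℕ) : ℂ))) (n / d) :=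
    isPrimitiveRoot_exp_two_pi_I_mul_div (right_ne_zero_of_mul (hnd ▸ hn.ne'))
      (Nat.Coprime.coprime_dvd_right (Nat.div_dvd_of_dvd hdn) hl)
  have hA := det_typeIMatA_eq_one hcop' hd k
  have hB := det_typeIMatB n d l
  refine ⟨hA, hB, ?_⟩
  rw [GeneralLinearGroup.forall_mem_closure_det_eq_one_iff (by simp [hA])
    (by simp [hB, exp_ne_zero]), and_iff_right hA, hB, neg_one_pow_mul_eq_one_iff,
    hζ.eq_neg_one_pow_iff]
  exact or_congr (eq_one_and_even_pred_iff hcop' hd hnd hpq) (eq_two_and_odd_pred_iff hd0 hnd hpq)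

/-- **Determinants of the type I representations (row I of the determinant table).**
With `d` the multiplicative order of `r` mod `m`, `n' = n/d`, every prime divisor of `d`
dividing `n'`, `gcd(k,m) = gcd(l,n) = 1`: `det A₀ = 1`,
`det B₀ = (−1)^{d−1} e^{2πil/n'}`, and the subgroup of `GL(d, ℂ)` generated by `A₀` and `B₀`
is contained in `SL(d, ℂ)` iff `m = n = d = 1` or `d = 2^s`, `n = 2^{s+1}` for some `s ≥ 1`. -/
theorem typeI_representation_determinants
    (m n r d : ℕ) (hm : 0 < m) (hn : 0 < n) (hr : 0 < r)
    (hrn : r ^ n ≡ 1 [MOD m]) (hcop : Nat.gcd (n * (r - 1)) m = 1)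
    (hd : orderOf (r : ZMod m) = d) (hdn : d ∣ n)
    (hpq : ∀ p : ℕ, p.Prime → p ∣ d → p ∣ n / d)
    (k l : ℤ) (hk : Int.gcd k (m : ℤ) = 1) (hl : Int.gcd l (n : ℤ) = 1) :
    (typeIMatA m d r k).det = 1 ∧
    (typeIMatB n d l).det =
      (-1 : ℂ) ^ (d - 1) * Complex.exp (2 * Real.pi * Complex.I * (l : ℂ) / ((n / d : ℕ) : ℂ)) ∧
    ((∀ M : Matrix.GeneralLinearGroup (Fin d) ℂ,
        M ∈ Subgroup.closure {g : Matrix.GeneralLinearGroup (Fin d) ℂ |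
          (g : Matrix (Fin d) (Fin d) ℂ) = typeIMatA m d r k ∨
          (g : Matrix (Fin d) (Fin d) ℂ) = typeIMatB n d l} →
        (M : Matrix (Fin d) (Fin d) ℂ).det = 1) ↔
      (m = 1 ∧ n = 1 ∧ d = 1) ∨ ∃ s : ℕ, 1 ≤ s ∧ d = 2 ^ s ∧ n = 2 ^ (s + 1)) :=
  typeI_representation_determinants_general m n r d hn hcop hd hdn hpq k l hl
end

section
/- Let m, n, r be positive integers with r^n ≡ 1 (mod m) and gcd(n(r−1), m) = 1, let d be the multiplicative order of r modulo m, assume d divides n, set n' = n/d, and assume every prime divisor of d divides n'. Let k, l be integers with gcd(k, m) = 1 and gcd(l, n) = 1. Define matrices A₀, B₀ of size d×d over ℂ by A₀ = diag(e^{2πik/m}, e^{2πikr/m}, …, e^{2πikr^{d−1}/m}) and B₀ having (j, j+1)-entry equal to 1 for 1 ≤ j ≤ d−1, (d, 1)-entry equal to e^{2πil/n'}, and all other entries 0. Then A₀^m = I, B₀^n = I, B₀A₀B₀⁻¹ = A₀^r, the subgroup G of GL(d, ℂ) generated by A₀ and B₀ has order mn, the tautological d-dimensional representation of G (the inclusion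 G ⊆ GL(d, ℂ)) is irreducible, and no element of G other than the identity has 1 as an eigenvalue. -/
/-
`A₀` is diagonal with entries `ζ ^ r ^ x` for a primitive `m`-th root of unity `ζ`, and `B₀` is a
twisted cyclic shift with `B₀ ^ d = ε • 1` for a primitive `n'`-th root of unity `ε`; since
`B₀ A₀ = A₀ ^ r B₀`, every element of the group is some `A₀ ^ a * B₀ ^ b`.

The heart of the proof: if `A₀ ^ a * B₀ ^ b` fixes a nonzero vector, then `m ∣ a` and `n ∣ b`.
With `e = gcd b d` and `f = d / e`, the power `(A₀ ^ a * B₀ ^ b) ^ f` is the diagonal matrix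
`ε ^ (b / e) • A₀ ^ N`, so `ε ^ (b / e) * ζ ^ (N * r ^ x) = 1` for some `x`; as `m` and `n'` are
coprime, `n' ∣ b / e`. A prime factor of `f` would divide `d`, hence `n'`, hence `b / e`, which is
coprime to `f`; so `f = 1`, i.e. `d ∣ b`, and the same computation with `f = 1` gives `m ∣ a` and
`n' ∣ b / d`. Applied to `A₀ ^ a * B₀ ^ b = 1` this counts the group, and applied to a fixed vector
it shows that the group acts without fixed points.

Irreducibility: an invariant subspace is invariant under every polynomial in `A₀`, whose eigenvalues
are distinct, so it contains a coordinate vector; `B₀` moves the coordinate lines around a cycle.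
-/

open Matrix Complex

theorem eq_one_of_mul_eq_one_of_coprime {M : Type*} [CommMonoid M] {x y : M} {m n : ℕ}
    (hmn : m.Coprime n) (hx : x ^ m = 1) (hy : y ^ n = 1) (hxy : x * y = 1) : x = 1 := by
  have hxn : x ^ n = 1 :=
    calc x ^ n = (x * y) ^ n := by rw [mul_pow, hy, mul_one]
      _ = 1 := by rw [hxy, one_pow]
  exact (pow_eq_one_iff_of_coprime hmn).1 ⟨hx, hxn⟩

theorem Nat.dvd_of_dvd_div_gcd {d j n : ℕ} (hd : 0 < d) (hpd : ∀ p, p.Prime → p ∣ d → p ∣ n)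
    (h : n ∣ j / j.gcd d) : d ∣ j := by
  have hcop := Nat.coprime_div_gcd_div_gcd (m := j) (Nat.gcd_pos_of_pos_right j hd)
  have hone : d / j.gcd d = 1 := by
    refine Nat.eq_one_iff_not_exists_prime_dvd.2 fun p hp hpf => hp.one_lt.ne' ?_
    have hpd' : p ∣ d := hpf.trans (Nat.div_dvd_of_dvd (Nat.gcd_dvd_right j d))
    have hpj : p ∣ j / j.gcd d := (hpd p hp hpd').trans h
    exact Nat.eq_one_of_dvd_coprimes hcop hpj hpf
  rw [← Nat.eq_of_dvd_of_div_eq_one (Nat.gcd_dvd_right j d) hone]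
  exact Nat.gcd_dvd_left j d

section Monoid
variable {M : Type*} [Monoid M] {a b : M} {r : ℕ}

theorem pow_mul_pow_comm_of_mul_eq (h : b * a = a ^ r * b) (i j : ℕ) :
    b ^ j * a ^ i = a ^ (i * r ^ j) * b ^ j := by
  induction j generalizing i with
  | zero => simp
  | succ j ih =>
    have hb : b * a ^ i = a ^ (i * r) * b := by
      rw [mul_comm i, pow_mul]; exact (SemiconjBy.pow_right h i).eq
    rw [pow_succ, mul_assoc, hb, ← mul_assoc, ih, mul_assoc, ← pow_succ, pow_succ r, mul_assoc,
      mul_comm r]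

theorem pow_mul_pow_mul_pow_mul_pow_of_mul_eq (h : b * a = a ^ r * b) (i j i' j' : ℕ) :
    a ^ i * b ^ j * (a ^ i' * b ^ j') = a ^ (i + i' * r ^ j) * b ^ (j + j') := by
  rw [mul_assoc, ← mul_assoc (b ^ j), pow_mul_pow_comm_of_mul_eq h, pow_add, pow_add]
  simp only [mul_assoc]

theorem pow_mul_pow_pow_of_mul_eq (h : b * a = a ^ r * b) (i j f : ℕ) :
    (a ^ i * b ^ j) ^ f = a ^ (i * ∑ t ∈ Finset.range f, r ^ (j * t)) * b ^ (j * f) := by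
  induction f with
  | zero => simp
  | succ f ih =>
    rw [pow_succ, ih, pow_mul_pow_mul_pow_mul_pow_of_mul_eq h, Finset.sum_range_succ]
    congr 2; ring

end Monoid

section Group
variable {G : Type*} [Group G] {a b : G} {r m n : ℕ}

theorem exists_eq_pow_mul_pow_of_mem_closure (h : b * a = a ^ r * b) (ha : IsOfFinOrder a)
    (hb : IsOfFinOrder b) {g : G} (hg : g ∈ Subgroup.closure {a, b}) :
    ∃ i j : ℕ, g = a ^ i * b ^ j := by
  rw [← Subgroup.mem_toSubmonoid, Subgroup.closure_toSubmonoid_of_isOfFinOrder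
    (by simp [ha, hb])] at hg
  induction hg using Submonoid.closure_induction with
  | mem g hg =>
    rcases hg with rfl | rfl
    · exact ⟨1, 0, by simp⟩
    · exact ⟨0, 1, by simp⟩
  | one => exact ⟨0, 0, by simp⟩
  | mul g g' _ _ ih ih' =>
    obtain ⟨i, j, rfl⟩ := ih
    obtain ⟨i', j', rfl⟩ := ih'
    exact ⟨_, _, pow_mul_pow_mul_pow_mul_pow_of_mul_eq h i j i' j'⟩

theorem modEq_of_pow_mul_pow_eq (hm : 0 < m) (hn : 0 < n) (ha : a ^ m = 1) (hb : b ^ n = 1)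
    (huniq : ∀ i j : ℕ, a ^ i * b ^ j = 1 → m ∣ i ∧ n ∣ j)
    {i j i' j' : ℕ} (heq : a ^ i * b ^ j = a ^ i' * b ^ j') : i ≡ i' [MOD m] ∧ j ≡ j' [MOD n] := by
  have hmi : (m - 1) * i' + i' = m * i' := by
    rw [← Nat.succ_mul, Nat.succ_eq_add_one, Nat.sub_add_cancel hm]
  have hnj : j' + (n - 1) * j' = n * j' := by
    rw [add_comm, ← Nat.succ_mul, Nat.succ_eq_add_one, Nat.sub_add_cancel hn]
  have hone : a ^ ((m - 1) * i' + i) * b ^ (j + (n - 1) * j') = 1 :=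
    calc _ = a ^ ((m - 1) * i') * (a ^ i * b ^ j) * b ^ ((n - 1) * j') := by
          simp only [pow_add, mul_assoc]
      _ = a ^ ((m - 1) * i' + i') * b ^ (j' + (n - 1) * j') := by
          rw [heq]; simp only [pow_add, mul_assoc]
      _ = 1 := by rw [hmi, hnj, pow_mul, pow_mul, ha, hb, one_pow, one_pow, one_mul]
  obtain ⟨hdi, hdj⟩ := huniq _ _ hone
  constructor
  · refine Nat.ModEq.add_left_cancel' ((m - 1) * i') ?_
    rw [hmi]
    exact (Nat.modEq_zero_iff_dvd.2 hdi).trans (Nat.modEq_zero_iff_dvd.2 (dvd_mul_right _ _)).symm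
  · refine Nat.ModEq.add_right_cancel' ((n - 1) * j') ?_
    rw [hnj]
    exact (Nat.modEq_zero_iff_dvd.2 hdj).trans (Nat.modEq_zero_iff_dvd.2 (dvd_mul_right _ _)).symm

theorem card_closure_pair_eq_mul (h : b * a = a ^ r * b) (hm : 0 < m) (hn : 0 < n)
    (ha : a ^ m = 1) (hb : b ^ n = 1) (huniq : ∀ i j : ℕ, a ^ i * b ^ j = 1 → m ∣ i ∧ n ∣ j) :
    Nat.card (Subgroup.closure {a, b}) = m * n := by
  have : NeZero m := ⟨hm.ne'⟩
  have : NeZero n := ⟨hn.ne'⟩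
  let F : ZMod m × ZMod n → Subgroup.closure {a, b} := fun p =>
    ⟨a ^ p.1.val * b ^ p.2.val, mul_mem (pow_mem (Subgroup.subset_closure (by simp)) _)
      (pow_mem (Subgroup.subset_closure (by simp)) _)⟩
  have hF : Function.Bijective F := by
    constructor
    · rintro ⟨i, j⟩ ⟨i', j'⟩ hp
      obtain ⟨hi, hj⟩ := modEq_of_pow_mul_pow_eq hm hn ha hb huniq (congrArg Subtype.val hp)
      simp only [Prod.mk.injEq]
      rw [← ZMod.natCast_zmod_val i, ← ZMod.natCast_zmod_val i', ← ZMod.natCast_zmod_val j,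
        ← ZMod.natCast_zmod_val j', ZMod.natCast_eq_natCast_iff, ZMod.natCast_eq_natCast_iff]
      exact ⟨hi, hj⟩
    · rintro ⟨g, hg⟩
      obtain ⟨i, j, rfl⟩ := exists_eq_pow_mul_pow_of_mem_closure h
        (isOfFinOrder_iff_pow_eq_one.2 ⟨m, hm, ha⟩) (isOfFinOrder_iff_pow_eq_one.2 ⟨n, hn, hb⟩)
        hg
      refine ⟨((i : ZMod m), (j : ZMod n)), Subtype.ext ?_⟩
      simp only [F, ZMod.val_natCast, ← pow_eq_pow_mod _ ha, ← pow_eq_pow_mod _ hb]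
  rw [← Nat.card_eq_of_bijective F hF, Nat.card_prod, Nat.card_zmod, Nat.card_zmod]

end Group

theorem setOf_val_eq_or_val_eq {M : Type*} [Monoid M] (a b : Mˣ) :
    {g : Mˣ | (g : M) = a ∨ (g : M) = b} = {a, b} := by
  ext g
  simp [Units.ext_iff]

section MatrixGroup
variable {ι R : Type*} [Fintype ι] [DecidableEq ι] [Semiring R] {A B : Matrix ι ι R} {m n r : ℕ}

theorem card_closure_eq_mul_of_mulVec_eq_self [Nontrivial R] [Nonempty ι] (hm : 0 < m)
    (hn : 0 < n) (hA : A ^ m = 1) (hB : B ^ n = 1) (hBA : B * A = A ^ r * B)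
    (hfix : ∀ {i j : ℕ} {v : ι → R}, v ≠ 0 → (A ^ i * B ^ j) *ᵥ v = v → m ∣ i ∧ n ∣ j) :
    Nat.card (Subgroup.closure {g : GL ι R | (g : Matrix ι ι R) = A ∨ (g : Matrix ι ι R) = B}) =
      m * n := by
  obtain ⟨a, rfl⟩ := IsUnit.of_pow_eq_one hA hm.ne'
  obtain ⟨b, rfl⟩ := IsUnit.of_pow_eq_one hB hn.ne'
  rw [setOf_val_eq_or_val_eq]
  refine card_closure_pair_eq_mul (Units.ext (by simpa using hBA)) hm hn
    (Units.ext (by simpa using hA)) (Units.ext (by simpa using hB)) fun i j h => ?_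
  refine hfix (v := fun _ => 1) (Function.ne_iff.2 ⟨Classical.arbitrary ι, one_ne_zero⟩) ?_
  rw [← Units.val_pow_eq_pow_val, ← Units.val_pow_eq_pow_val, ← Units.val_mul, h, Units.val_one,
    one_mulVec]

theorem eq_zero_of_mulVec_eq_self_of_mem_closure (hm : 0 < m) (hn : 0 < n) (hA : A ^ m = 1)
    (hB : B ^ n = 1) (hBA : B * A = A ^ r * B)
    (hfix : ∀ {i j : ℕ} {v : ι → R}, v ≠ 0 → (A ^ i * B ^ j) *ᵥ v = v → m ∣ i ∧ n ∣ j) :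
    ∀ g ∈ Subgroup.closure {g : GL ι R | (g : Matrix ι ι R) = A ∨ (g : Matrix ι ι R) = B},
      g ≠ 1 → ∀ v : ι → R, (g : Matrix ι ι R) *ᵥ v = v → v = 0 := by
  obtain ⟨a, rfl⟩ := IsUnit.of_pow_eq_one hA hm.ne'
  obtain ⟨b, rfl⟩ := IsUnit.of_pow_eq_one hB hn.ne'
  rw [setOf_val_eq_or_val_eq]
  intro g hg hg1 v hv
  have ha : a ^ m = 1 := Units.ext (by simpa using hA)
  have hb : b ^ n = 1 := Units.ext (by simpa using hB)
  obtain ⟨i, j, rfl⟩ := exists_eq_pow_mul_pow_of_mem_closure (Units.ext (by simpa using hBA))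
    (isOfFinOrder_iff_pow_eq_one.2 ⟨m, hm, ha⟩) (isOfFinOrder_iff_pow_eq_one.2 ⟨n, hn, hb⟩) hg
  by_contra hv0
  obtain ⟨⟨s, rfl⟩, ⟨t, rfl⟩⟩ := hfix hv0 (by simpa using hv)
  exact hg1 (by rw [pow_mul, pow_mul, ha, hb, one_pow, one_pow, one_mul])

end MatrixGroup

theorem pow_mulVec_eq_self {R ι : Type*} [Semiring R] [Fintype ι] [DecidableEq ι]
    {M : Matrix ι ι R} {v : ι → R} (h : M *ᵥ v = v) (t : ℕ) : M ^ t *ᵥ v = v := by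
  induction t with
  | zero => rw [pow_zero, one_mulVec]
  | succ t ih => rw [pow_succ, ← mulVec_mulVec, h, ih]

section TwistedShift
variable {R : Type*} [CommSemiring R] (d : ℕ) (ε : R)

def twistedShift : Matrix (Fin d) (Fin d) R :=
  Matrix.of fun i j =>
    if (j : ℕ) = (i : ℕ) + 1 then 1
    else if (i : ℕ) = d - 1 ∧ (j : ℕ) = 0 then ε else 0

variable {d ε}

theorem twistedShift_mulVec_single_of_val_eq_succ {i j : Fin d} (h : (j : ℕ) = i + 1) :
    twistedShift d ε *ᵥ Pi.single j 1 = Pi.single i 1 := by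
  ext x
  have := x.isLt
  simp only [mulVec_single_one, col_apply, twistedShift, of_apply, Pi.single_apply, Fin.ext_iff]
  split_ifs <;> first | rfl | omega

theorem twistedShift_mulVec_single_zero {i j : Fin d} (hi : (i : ℕ) = d - 1) (hj : (j : ℕ) = 0) :
    twistedShift d ε *ᵥ Pi.single j 1 = ε • Pi.single i 1 := by
  ext x
  have := x.isLt
  simp only [mulVec_single_one, col_apply, twistedShift, of_apply, Pi.smul_apply, Pi.single_apply,
    Fin.ext_iff, smul_eq_mul, mul_ite, mul_one, mul_zero]
  split_ifs <;> first | rfl | omega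

theorem twistedShift_pow_mulVec_single {i j : Fin d} {t : ℕ} (h : (j : ℕ) = i + t) :
    twistedShift d ε ^ t *ᵥ Pi.single j 1 = Pi.single i 1 := by
  induction t generalizing j with
  | zero => rw [pow_zero, one_mulVec, Fin.ext h]
  | succ t ih =>
    rw [pow_succ, ← mulVec_mulVec,
      twistedShift_mulVec_single_of_val_eq_succ (i := ⟨i + t, by omega⟩) (by simp; omega)]
    exact ih rfl

theorem twistedShift_pow_self : twistedShift d ε ^ d = ε • (1 : Matrix (Fin d) (Fin d) R) := by
  refine ext_of_mulVec_single fun j => ?_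
  have hd : twistedShift d ε ^ d =
      twistedShift d ε ^ (d - 1 - j) * twistedShift d ε * twistedShift d ε ^ (j : ℕ) := by
    rw [← pow_succ, ← pow_add]; congr 1; omega
  have hd0 : 0 < d := j.pos
  rw [smul_mulVec, one_mulVec, hd, ← mulVec_mulVec, ← mulVec_mulVec,
    twistedShift_pow_mulVec_single (i := ⟨0, hd0⟩) (by simp),
    twistedShift_mulVec_single_zero (i := ⟨d - 1, by omega⟩) rfl rfl,
    mulVec_smul,
    twistedShift_pow_mulVec_single (i := j) (by simp; omega)]

theorem twistedShift_pow_of_dvd {j : ℕ} (h : d ∣ j) :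
    twistedShift d ε ^ j = ε ^ (j / d) • (1 : Matrix (Fin d) (Fin d) R) := by
  rw [← Nat.mul_div_cancel' h, pow_mul, twistedShift_pow_self, smul_pow, one_pow,
    Nat.mul_div_cancel_left' h]

theorem twistedShift_pow_eq_one {n : ℕ} (hdn : d ∣ n) (hε : ε ^ (n / d) = 1) :
    twistedShift d ε ^ n = 1 := by
  rw [twistedShift_pow_of_dvd hdn, hε, one_smul]

theorem twistedShift_mul_diagonal {μ : ℕ → R} (hμ : μ d = μ 0) :
    twistedShift d ε * diagonal (fun x : Fin d => μ x) =
      diagonal (fun x : Fin d => μ (x + 1)) * twistedShift d ε := by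
  ext x y
  simp only [mul_diagonal, diagonal_mul, twistedShift, of_apply]
  split_ifs with h1 h2
  · rw [h1, one_mul, mul_one]
  · rw [h2.2, ← hμ, h2.1, Nat.sub_add_cancel (by omega), mul_comm]
  · simp

end TwistedShift

section Diagonal
variable {K : Type*} [Field K] {d : ℕ} {μ : Fin d → K} {W : Submodule K (Fin d → K)}

theorem exists_eq_one_of_diagonal_mulVec_eq_self {v : Fin d → K} (hv : v ≠ 0)
    (h : diagonal μ *ᵥ v = v) : ∃ x, μ x = 1 := by
  obtain ⟨x, hx⟩ := Function.ne_iff.1 hv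
  refine ⟨x, (mul_eq_right₀ hx).1 ?_⟩
  rw [← mulVec_diagonal, h]

open Polynomial in
theorem diagonal_eval_mulVec_mem (hW : ∀ w ∈ W, diagonal μ *ᵥ w ∈ W) (p : K[X]) :
    ∀ w ∈ W, diagonal (fun x => p.eval (μ x)) *ᵥ w ∈ W := by
  induction p using Polynomial.induction_on with
  | C c =>
    intro w hw
    convert W.smul_mem c hw using 1
    ext x
    simp [mulVec_diagonal]
  | add p q hp hq =>
    intro w hw
    simpa only [eval_add, ← diagonal_add, add_mulVec] using W.add_mem (hp w hw) (hq w hw)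
  | monomial k c ih =>
    intro w hw
    have : diagonal (fun x => (C c * X ^ (k + 1)).eval (μ x)) =
        diagonal (fun x => (C c * X ^ k).eval (μ x)) * diagonal μ := by
      rw [diagonal_mul_diagonal]; congr 1; ext x; simp [pow_succ, mul_assoc]
    rw [this, ← mulVec_mulVec]
    exact ih _ (hW w hw)

theorem single_mem_of_diagonal_mulVec_mem (hμ : Function.Injective μ)
    (hW : ∀ w ∈ W, diagonal μ *ᵥ w ∈ W) {w : Fin d → K} (hw : w ∈ W) (j : Fin d) :
    Pi.single j (w j) ∈ W := by
  have hproj : diagonal (fun x => (Lagrange.basis Finset.univ μ j).eval (μ x)) *ᵥ w =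
      Pi.single j (w j) := by
    ext x
    rw [mulVec_diagonal, Pi.single_apply]
    split_ifs with hx
    · rw [hx, Lagrange.eval_basis_self hμ.injOn (Finset.mem_univ j), one_mul]
    · rw [Lagrange.eval_basis_of_ne (Ne.symm hx) (Finset.mem_univ x), zero_mul]
  exact hproj ▸ diagonal_eval_mulVec_mem hW _ w hw

end Diagonal

section Irreducible
variable {K : Type*} [Field K] {d : ℕ} {μ : Fin d → K} {ε : K} {W : Submodule K (Fin d → K)}

theorem eq_bot_or_eq_top_of_diagonal_twistedShift_invariant (hμ : Function.Injective μ)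
    (hε : ε ≠ 0) (hA : ∀ w ∈ W, diagonal μ *ᵥ w ∈ W)
    (hB : ∀ w ∈ W, twistedShift d ε *ᵥ w ∈ W) : W = ⊥ ∨ W = ⊤ := by
  refine or_iff_not_imp_left.2 fun hW => ?_
  obtain ⟨w, hw, hw0⟩ := W.exists_mem_ne_zero_of_ne_bot hW
  obtain ⟨j, hj⟩ := Function.ne_iff.1 hw0
  have hd : 0 < d := j.pos
  have hBpow : ∀ t, ∀ w ∈ W, twistedShift d ε ^ t *ᵥ w ∈ W := by
    intro t
    induction t with
    | zero => simp
    | succ t ih => intro w hw; rw [pow_succ', ← mulVec_mulVec]; exact hB _ (ih w hw)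
  have hj1 : Pi.single j 1 ∈ W := by
    simpa [← Pi.single_smul', inv_mul_cancel₀ hj] using
      W.smul_mem (w j)⁻¹ (single_mem_of_diagonal_mulVec_mem hμ hA hw j)
  have h0 : Pi.single ⟨0, hd⟩ 1 ∈ W := by
    have := hBpow j _ hj1
    rwa [twistedShift_pow_mulVec_single (i := ⟨0, hd⟩) (by simp)] at this
  have hlast : Pi.single ⟨d - 1, by omega⟩ 1 ∈ W := by
    have := W.smul_mem ε⁻¹ (hB _ h0)
    rwa [twistedShift_mulVec_single_zero (i := ⟨d - 1, by omega⟩) rfl rfl, smul_smul,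
      inv_mul_cancel₀ hε, one_smul] at this
  have hall : ∀ i : Fin d, Pi.single i 1 ∈ W := fun i => by
    have := hBpow (d - 1 - i) _ hlast
    rwa [twistedShift_pow_mulVec_single (i := i) (by simp; omega)] at this
  refine eq_top_iff.2 ((Pi.basisFun K (Fin d)).span_eq ▸ Submodule.span_le.2 ?_)
  rintro _ ⟨i, rfl⟩
  simpa using hall i

end Irreducible

theorem pow_orderOf_natCast_modEq_one (r m : ℕ) : r ^ orderOf (r : ZMod m) ≡ 1 [MOD m] := by
  rw [← ZMod.natCast_eq_natCast_iff, Nat.cast_pow, Nat.cast_one, pow_orderOf_eq_one]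

section TypeI
variable {K : Type*} [Field K] {m n d r : ℕ} {ζ ε : K}

theorem diagonal_pow_pow_pow_eq_one (hζ : ζ ^ m = 1) :
    diagonal (fun x : Fin d => ζ ^ r ^ (x : ℕ)) ^ m = 1 := by
  rw [diagonal_pow, ← diagonal_one]
  congr 1
  ext x
  rw [Pi.pow_apply, ← pow_mul, mul_comm, pow_mul, hζ, one_pow]

theorem twistedShift_mul_diagonal_pow_pow (hζ : ζ ^ m = 1) (hrd : r ^ d ≡ 1 [MOD m]) :
    twistedShift d ε * diagonal (fun x : Fin d => ζ ^ r ^ (x : ℕ)) =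
      diagonal (fun x : Fin d => ζ ^ r ^ (x : ℕ)) ^ r * twistedShift d ε := by
  have hμ : ζ ^ r ^ d = ζ ^ r ^ 0 := by
    rw [pow_eq_pow_mod _ hζ, hrd, pow_zero, ← pow_eq_pow_mod _ hζ]
  rw [twistedShift_mul_diagonal (μ := fun t => ζ ^ r ^ t) hμ, diagonal_pow]
  congr 2
  ext x
  rw [Pi.pow_apply, pow_succ, pow_mul]

theorem injective_pow_pow (hm : 0 < m) (hζ : IsPrimitiveRoot ζ m)
    (hd : orderOf (r : ZMod m) = d) : Function.Injective (fun x : Fin d => ζ ^ r ^ (x : ℕ)) := by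
  intro x y (hxy : ζ ^ r ^ (x : ℕ) = ζ ^ r ^ (y : ℕ))
  have hζm : IsOfFinOrder ζ := orderOf_pos_iff.1 (hζ.eq_orderOf ▸ hm)
  have hr : IsOfFinOrder (r : ZMod m) := orderOf_pos_iff.1 (by rw [hd]; exact x.pos)
  rw [hζm.pow_eq_pow_iff_modEq, ← hζ.eq_orderOf] at hxy
  have hZ := (ZMod.natCast_eq_natCast_iff _ _ _).2 hxy
  rw [Nat.cast_pow, Nat.cast_pow, hr.pow_eq_pow_iff_modEq, hd] at hZ
  exact Fin.ext (hZ.eq_of_lt_of_lt x.2 y.2)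

theorem dvd_of_mulVec_eq_self_of_dvd (hζ : IsPrimitiveRoot ζ m) (hε : IsPrimitiveRoot ε n)
    (hmn : m.Coprime n) (hrm : r.Coprime m) {i j : ℕ} (hj : d ∣ j) {v : Fin d → K} (hv : v ≠ 0)
    (h : (diagonal (fun x : Fin d => ζ ^ r ^ (x : ℕ)) ^ i * twistedShift d ε ^ j) *ᵥ v = v) :
    m ∣ i ∧ n ∣ j / d := by
  rw [twistedShift_pow_of_dvd hj, mul_smul_comm, mul_one, diagonal_pow, ← diagonal_smul] at h
  obtain ⟨x, hx⟩ := exists_eq_one_of_diagonal_mulVec_eq_self hv h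
  rw [Pi.smul_apply, Pi.pow_apply, smul_eq_mul] at hx
  have hε1 : ε ^ (j / d) = 1 := eq_one_of_mul_eq_one_of_coprime hmn.symm
    (by rw [← pow_mul, hε.pow_eq_one_iff_dvd]; exact dvd_mul_left n _)
    (by rw [← pow_mul, ← pow_mul, hζ.pow_eq_one_iff_dvd]; exact (dvd_mul_left m i).mul_left _) hx
  rw [hε1, one_mul, ← pow_mul, hζ.pow_eq_one_iff_dvd] at hx
  exact ⟨(Nat.Coprime.pow_left _ hrm).symm.dvd_of_dvd_mul_left hx, (hε.pow_eq_one_iff_dvd _).1 hε1⟩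

theorem dvd_of_mulVec_eq_self (hζ : IsPrimitiveRoot ζ m) (hε : IsPrimitiveRoot ε (n / d))
    (hmn : m.Coprime (n / d)) (hd : orderOf (r : ZMod m) = d) (hdn : d ∣ n)
    (hpd : ∀ p : ℕ, p.Prime → p ∣ d → p ∣ n / d) {i j : ℕ} {v : Fin d → K} (hv : v ≠ 0)
    (h : (diagonal (fun x : Fin d => ζ ^ r ^ (x : ℕ)) ^ i * twistedShift d ε ^ j) *ᵥ v = v) :
    m ∣ i ∧ n ∣ j := by
  have hd0 : 0 < d := Nat.pos_of_ne_zero fun hd0 => hv (by subst hd0; exact Subsingleton.elim _ _)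
  have hrm : r.Coprime m :=
    (ZMod.isUnit_iff_coprime r m).1 (orderOf_pos_iff.1 (by rw [hd]; exact hd0)).isUnit
  have hrd : r ^ d ≡ 1 [MOD m] := hd ▸ pow_orderOf_natCast_modEq_one r m
  have hjf : j * (d / j.gcd d) = d * (j / j.gcd d) := by
    rw [← Nat.mul_div_assoc _ (Nat.gcd_dvd_right j d), ← Nat.mul_div_assoc _ (Nat.gcd_dvd_left j d),
      mul_comm]
  have hpow := pow_mulVec_eq_self h (d / j.gcd d)
  rw [pow_mul_pow_pow_of_mul_eq (twistedShift_mul_diagonal_pow_pow hζ.pow_eq_one hrd)] at hpow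
  have hgcd := (dvd_of_mulVec_eq_self_of_dvd hζ hε hmn hrm (hjf ▸ dvd_mul_right d _) hv hpow).2
  rw [hjf, Nat.mul_div_cancel_left _ hd0] at hgcd
  have hdj := Nat.dvd_of_dvd_div_gcd hd0 hpd hgcd
  obtain ⟨hi, hjd⟩ := dvd_of_mulVec_eq_self_of_dvd hζ hε hmn hrm hdj hv h
  exact ⟨hi, Nat.mul_div_cancel' hdn ▸ Nat.mul_dvd_of_dvd_div hdj hjd⟩

end TypeI

theorem isPrimitiveRoot_exp_mul_div {N : ℕ} (hN : 0 < N) {c : ℤ} (hc : IsCoprime c N) :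
    IsPrimitiveRoot (exp (2 * Real.pi * I * c / N)) N := by
  rw [mul_div_assoc]
  exact isPrimitiveRoot_exp_of_isCoprime c N hN.ne' hc

theorem typeIMatA_eq (m d r : ℕ) (k : ℤ) :
    typeIMatA m d r k =
      diagonal (fun x : Fin d => exp (2 * Real.pi * I * k / m) ^ r ^ (x : ℕ)) := by
  rw [typeIMatA]
  congr 1
  ext x
  rw [← exp_nat_mul]
  congr 1
  push_cast
  ring

theorem typeIMatB_eq (n d : ℕ) (l : ℤ) :
    typeIMatB n d l = twistedShift d (exp (2 * Real.pi * I * l / (n / d : ℕ))) :=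
  rfl

theorem typeI_representation_is_irreducible_without_fixed_points_general
    (m n r d : ℕ) (hm : 0 < m) (hn : 0 < n)
    (hcop : Nat.gcd (n * (r - 1)) m = 1)
    (hd : orderOf (r : ZMod m) = d) (hdn : d ∣ n)
    (hpq : ∀ p : ℕ, p.Prime → p ∣ d → p ∣ n / d)
    (k l : ℤ) (hk : Int.gcd k (m : ℤ) = 1) (hl : Int.gcd l (n : ℤ) = 1) :
    typeIMatA m d r k ^ m = 1 ∧
    typeIMatB n d l ^ n = 1 ∧
    typeIMatB n d l * typeIMatA m d r k * (typeIMatB n d l)⁻¹ = typeIMatA m d r k ^ r ∧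
    Nat.card (Subgroup.closure {g : Matrix.GeneralLinearGroup (Fin d) ℂ |
          (g : Matrix (Fin d) (Fin d) ℂ) = typeIMatA m d r k ∨
          (g : Matrix (Fin d) (Fin d) ℂ) = typeIMatB n d l}) = m * n ∧
    (∀ W : Submodule ℂ (Fin d → ℂ),
      (∀ g ∈ Subgroup.closure {g : Matrix.GeneralLinearGroup (Fin d) ℂ |
          (g : Matrix (Fin d) (Fin d) ℂ) = typeIMatA m d r k ∨
          (g : Matrix (Fin d) (Fin d) ℂ) = typeIMatB n d l},
        ∀ w ∈ W, Matrix.mulVec (g : Matrix (Fin d) (Fin d) ℂ) w ∈ W) →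
      W = ⊥ ∨ W = ⊤) ∧
    (∀ g ∈ Subgroup.closure {g : Matrix.GeneralLinearGroup (Fin d) ℂ |
          (g : Matrix (Fin d) (Fin d) ℂ) = typeIMatA m d r k ∨
          (g : Matrix (Fin d) (Fin d) ℂ) = typeIMatB n d l},
      g ≠ 1 → ∀ v : Fin d → ℂ,
        Matrix.mulVec (g : Matrix (Fin d) (Fin d) ℂ) v = v → v = 0) := by
  have hd0 : 0 < d := Nat.pos_of_dvd_of_pos hdn hn
  have hn' : 0 < n / d := Nat.div_pos (Nat.le_of_dvd hn hdn) hd0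
  have hζ := isPrimitiveRoot_exp_mul_div hm (Int.isCoprime_iff_gcd_eq_one.2 hk)
  have hε := isPrimitiveRoot_exp_mul_div hn' ((Int.isCoprime_iff_gcd_eq_one.2 hl)
    |>.of_isCoprime_of_dvd_right (Int.natCast_dvd_natCast.2 (Nat.div_dvd_of_dvd hdn)))
  have hmn : m.Coprime (n / d) :=
    (Nat.Coprime.coprime_dvd_left (dvd_mul_right n (r - 1)) hcop).symm.coprime_dvd_right
      (Nat.div_dvd_of_dvd hdn)
  rw [typeIMatA_eq, typeIMatB_eq]
  set A := diagonal (fun x : Fin d => exp (2 * Real.pi * I * k / m) ^ r ^ (x : ℕ))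
  set B := twistedShift d (exp (2 * Real.pi * I * l / (n / d : ℕ)))
  have hAm : A ^ m = 1 := diagonal_pow_pow_pow_eq_one hζ.pow_eq_one
  have hBn : B ^ n = 1 := twistedShift_pow_eq_one hdn hε.pow_eq_one
  have hBA : B * A = A ^ r * B :=
    twistedShift_mul_diagonal_pow_pow hζ.pow_eq_one (hd ▸ pow_orderOf_natCast_modEq_one r m)
  have hfix : ∀ {i j : ℕ} {v : Fin d → ℂ}, v ≠ 0 → (A ^ i * B ^ j) *ᵥ v = v → m ∣ i ∧ n ∣ j :=
    dvd_of_mulVec_eq_self hζ hε hmn hd hdn hpq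
  have : Nonempty (Fin d) := ⟨⟨0, hd0⟩⟩
  refine ⟨hAm, hBn, ?_, card_closure_eq_mul_of_mulVec_eq_self hm hn hAm hBn hBA hfix,
    fun W hW => ?_, eq_zero_of_mulVec_eq_self_of_mem_closure hm hn hAm hBn hBA hfix⟩
  · rw [hBA, mul_nonsing_inv_cancel_right _ _
      ((isUnit_iff_isUnit_det B).1 (.of_pow_eq_one hBn hn.ne'))]
  · obtain ⟨a, ha⟩ := IsUnit.of_pow_eq_one hAm hm.ne'
    obtain ⟨b, hb⟩ := IsUnit.of_pow_eq_one hBn hn.ne'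
    refine eq_bot_or_eq_top_of_diagonal_twistedShift_invariant (injective_pow_pow hm hζ hd)
      (hε.ne_zero hn'.ne') ?_ ?_
    · simpa only [ha] using hW a (Subgroup.subset_closure (Or.inl ha))
    · simpa only [hb] using hW b (Subgroup.subset_closure (Or.inr hb))

/-- **The matrices `A₀`, `B₀` realize the irreducible fixed-point-free representation
`π_{k,l}` of the type I group with parameters `(m, n, r)`.**  They satisfy `A₀^m = 1`,
`B₀^n = 1`, `B₀ A₀ B₀⁻¹ = A₀^r`; the subgroup of `GL(d, ℂ)` they generate has order `mn`;
its tautological `d`-dimensional representation is irreducible; and no element of this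
subgroup other than the identity has `1` as an eigenvalue. -/
theorem typeI_representation_is_irreducible_without_fixed_points
    (m n r d : ℕ) (hm : 0 < m) (hn : 0 < n) (hr : 0 < r)
    (hrn : r ^ n ≡ 1 [MOD m]) (hcop : Nat.gcd (n * (r - 1)) m = 1)
    (hd : orderOf (r : ZMod m) = d) (hdn : d ∣ n)
    (hpq : ∀ p : ℕ, p.Prime → p ∣ d → p ∣ n / d)
    (k l : ℤ) (hk : Int.gcd k (m : ℤ) = 1) (hl : Int.gcd l (n : ℤ) = 1) :
    typeIMatA m d r k ^ m = 1 ∧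
    typeIMatB n d l ^ n = 1 ∧
    typeIMatB n d l * typeIMatA m d r k * (typeIMatB n d l)⁻¹ = typeIMatA m d r k ^ r ∧
    Nat.card (Subgroup.closure {g : Matrix.GeneralLinearGroup (Fin d) ℂ |
          (g : Matrix (Fin d) (Fin d) ℂ) = typeIMatA m d r k ∨
          (g : Matrix (Fin d) (Fin d) ℂ) = typeIMatB n d l}) = m * n ∧
    (∀ W : Submodule ℂ (Fin d → ℂ),
      (∀ g ∈ Subgroup.closure {g : Matrix.GeneralLinearGroup (Fin d) ℂ |
          (g : Matrix (Fin d) (Fin d) ℂ) = typeIMatA m d r k ∨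
          (g : Matrix (Fin d) (Fin d) ℂ) = typeIMatB n d l},
        ∀ w ∈ W, Matrix.mulVec (g : Matrix (Fin d) (Fin d) ℂ) w ∈ W) →
      W = ⊥ ∨ W = ⊤) ∧
    (∀ g ∈ Subgroup.closure {g : Matrix.GeneralLinearGroup (Fin d) ℂ |
          (g : Matrix (Fin d) (Fin d) ℂ) = typeIMatA m d r k ∨
          (g : Matrix (Fin d) (Fin d) ℂ) = typeIMatB n d l},
      g ≠ 1 → ∀ v : Fin d → ℂ,
        Matrix.mulVec (g : Matrix (Fin d) (Fin d) ℂ) v = v → v = 0) :=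
  typeI_representation_is_irreducible_without_fixed_points_general m n r d hm hn hcop hd hdn hpq k l
    hk hl
end
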